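/- Under the Ambrosetti–Rabinowitz condition (a continuous, 0 < μ·A(t,v) ≤ v·a(t,v) for v ≠ 0), set ℓ = inf{A(t,v) : t ∈ [0,T], |v| = 1}. Then for any ξ ≠ 0 and any continuous v : [0,T] → ℝ, ∫₀^T A(t, ξ·v(t)) dt ≥ ℓ·|ξ|^μ ∫₀^T |v(t)|^μ dt − T·ℓ. -/

import Mathlib

open MeasureTheory Set

/-! The Ambrosetti–Rabinowitz inequality `μ A(v) ≤ v A'(v)` makes `s ↦ A(s u) s^(-μ)`
is nondecreasing on `s > 0`. Comparing `s = 1` with `s = |x|` and `u = x / |x|` gives the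
superquadratic growth `A(x) ≥ ℓ |x|^μ` for `|x| ≥ 1`, while `A ≥ 0 ≥ ℓ |x|^μ - ℓ` for `|x| < 1`.
The theorem integrates this pointwise bound `ℓ |x|^μ - ℓ ≤ A(x)` at `x = ξ v(t)`. -/

section AmbrosettiRabinowitz

variable {F f : ℝ → ℝ} {μ : ℝ}

theorem monotoneOn_comp_mul_mul_rpow_neg (hF : ∀ x, HasDerivAt F (f x) x)
    (hAR : ∀ x ≠ 0, μ * F x ≤ x * f x) {u : ℝ} (hu : u ≠ 0) :
    MonotoneOn (fun s => F (s * u) * s ^ (-μ)) (Ioi 0) := by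
  have hderiv : ∀ s ∈ Ioi (0 : ℝ), HasDerivAt (fun s => F (s * u) * s ^ (-μ))
      (f (s * u) * u * s ^ (-μ) + F (s * u) * (-μ * s ^ (-μ - 1))) s := fun s hs =>
    ((hF (s * u)).comp s (hasDerivAt_mul_const u)).mul
      (Real.hasDerivAt_rpow_const (Or.inl (ne_of_gt hs)))
  refine monotoneOn_of_deriv_nonneg (convex_Ioi 0)
    (fun s hs => (hderiv s hs).continuousAt.continuousWithinAt)
    (fun s hs => (hderiv s (interior_subset hs)).differentiableAt.differentiableWithinAt)
    (fun s hs => ?_)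
  rw [interior_Ioi] at hs
  rw [(hderiv s hs).deriv]
  have hs : (0 : ℝ) < s := hs
  have hpow : s ^ (-μ) = s ^ (-μ - 1) * s := by
    rw [← Real.rpow_add_one hs.ne']; ring_nf
  have hAR_su := hAR (s * u) (mul_ne_zero hs.ne' hu)
  have hpow_pos := Real.rpow_pos_of_pos hs (-μ - 1)
  -- the derivative is `s ^ (-μ - 1) * (s * u * f (s * u) - μ * F (s * u))`
  rw [hpow]
  nlinarith

theorem rpow_mul_le_comp_mul (hF : ∀ x, HasDerivAt F (f x) x)
    (hAR : ∀ x ≠ 0, μ * F x ≤ x * f x) {u : ℝ} (hu : u ≠ 0) {s : ℝ} (hs : 1 ≤ s) :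
    s ^ μ * F u ≤ F (s * u) := by
  have hs0 : (0 : ℝ) < s := one_pos.trans_le hs
  have hmono := monotoneOn_comp_mul_mul_rpow_neg hF hAR hu
    (mem_Ioi.2 one_pos) (mem_Ioi.2 hs0) hs
  simp only [one_mul, Real.one_rpow, mul_one] at hmono
  calc s ^ μ * F u ≤ s ^ μ * (F (s * u) * s ^ (-μ)) :=
        mul_le_mul_of_nonneg_left hmono (Real.rpow_nonneg hs0.le μ)
    _ = F (s * u) := by
        rw [mul_comm, mul_assoc, ← Real.rpow_add hs0, neg_add_cancel, Real.rpow_zero, mul_one]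

variable {ℓ : ℝ}

theorem mul_abs_rpow_le_of_one_le_abs (hF : ∀ x, HasDerivAt F (f x) x)
    (hAR : ∀ x ≠ 0, μ * F x ≤ x * f x) (hℓ : ∀ u, |u| = 1 → ℓ ≤ F u) {x : ℝ} (hx : 1 ≤ |x|) :
    ℓ * |x| ^ μ ≤ F x := by
  have hx0 : 0 < |x| := one_pos.trans_le hx
  set u := x / |x| with hu_def
  have hu : |u| = 1 := by rw [hu_def, abs_div, abs_abs, div_self hx0.ne']
  have hu0 : u ≠ 0 := fun h => by simp [h] at hu
  calc ℓ * |x| ^ μ ≤ |x| ^ μ * F u := by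
        rw [mul_comm]; exact mul_le_mul_of_nonneg_left (hℓ u hu) (Real.rpow_nonneg hx0.le μ)
    _ ≤ F (|x| * u) := rpow_mul_le_comp_mul hF hAR hu0 hx
    _ = F x := by rw [hu_def, mul_div_cancel₀ x hx0.ne']

theorem mul_abs_rpow_sub_le (hF : ∀ x, HasDerivAt F (f x) x)
    (hAR : ∀ x ≠ 0, μ * F x ≤ x * f x) (hμ : 0 ≤ μ) (hF_nonneg : ∀ x, 0 ≤ F x) (hℓ0 : 0 ≤ ℓ)
    (hℓ : ∀ u, |u| = 1 → ℓ ≤ F u) (x : ℝ) :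
    ℓ * |x| ^ μ - ℓ ≤ F x := by
  rcases le_or_gt 1 |x| with hx | hx
  · linarith [mul_abs_rpow_le_of_one_le_abs hF hAR hℓ hx, hℓ0]
  · have hx_rpow : |x| ^ μ ≤ 1 := Real.rpow_le_one (abs_nonneg x) hx.le hμ
    nlinarith [hF_nonneg x]

end AmbrosettiRabinowitz

theorem continuousOn_intervalIntegral_of_continuousOn_Icc_prod {E : Type*}
    [NormedAddCommGroup E] [NormedSpace ℝ E] {a : ℝ → ℝ → E} {b₁ b₂ : ℝ} (hb : b₁ ≤ b₂)
    (ha : ContinuousOn (Function.uncurry a) (Icc b₁ b₂ ×ˢ univ)) {g : ℝ → ℝ} (hg : Continuous g)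
    (c : ℝ) :
    ContinuousOn (fun t => ∫ ζ in c..g t, a t ζ) (Icc b₁ b₂) := by
  set p : ℝ → ℝ := fun t => projIcc b₁ b₂ hb t
  have hp : Continuous p := continuous_subtype_val.comp continuous_projIcc
  have hap : Continuous (Function.uncurry fun t ζ => a (p t) ζ) :=
    ha.comp_continuous ((hp.comp continuous_fst).prodMk continuous_snd)
      fun q => ⟨Subtype.mem _, mem_univ _⟩
  refine (intervalIntegral.continuous_parametric_intervalIntegral_of_continuous
    (μ := volume) (a₀ := c) hap hg).continuousOn.congr fun t ht => ?_
  simp only [p, projIcc_of_mem hb ht]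

theorem mul_integral_sub_mul_le_integral {g h : ℝ → ℝ} {T c d : ℝ} (hT : 0 ≤ T)
    (hg : IntervalIntegrable g volume 0 T) (hh : IntervalIntegrable h volume 0 T)
    (hle : ∀ t ∈ Icc 0 T, c * g t - d ≤ h t) :
    c * (∫ t in (0:ℝ)..T, g t) - T * d ≤ ∫ t in (0:ℝ)..T, h t :=
  calc c * (∫ t in (0:ℝ)..T, g t) - T * d = ∫ t in (0:ℝ)..T, (c * g t - d) := by
        rw [intervalIntegral.integral_sub (hg.const_mul c) intervalIntegrable_const,
          intervalIntegral.integral_const_mul, intervalIntegral.integral_const, smul_eq_mul,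
          sub_zero]
    _ ≤ ∫ t in (0:ℝ)..T, h t :=
        intervalIntegral.integral_mono_on hT ((hg.const_mul c).sub intervalIntegrable_const) hh hle

/-- under the Ambrosetti–Rabinowitz condition, with
`ℓ = inf{A(t,v) : t ∈ [0,T], |v| = 1}`, for any `ξ ≠ 0` and continuous `v`,
`∫₀ᵀ A(t, ξ·v(t)) dt ≥ ℓ·|ξ|^μ ∫₀ᵀ |v(t)|^μ dt − T·ℓ`. -/
theorem stmt19 (T μ : ℝ) (hT : 0 < T) (hμ : 0 < μ)
    (a : ℝ → ℝ → ℝ)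
    (ha_cont : ContinuousOn (Function.uncurry a) (Set.Icc (0:ℝ) T ×ˢ Set.univ))
    (A : ℝ → ℝ → ℝ)
    (hA : ∀ t x, A t x = ∫ ξ in (0:ℝ)..x, a t ξ)
    (hAR : ∀ t ∈ Set.Icc (0:ℝ) T, ∀ v : ℝ, v ≠ 0 →
      0 < μ * A t v ∧ μ * A t v ≤ v * a t v)
    (ℓ : ℝ)
    (hℓ : ℓ = sInf {y : ℝ | ∃ t ∈ Set.Icc (0:ℝ) T, ∃ v : ℝ, |v| = 1 ∧ y = A t v}) :
    ∀ ξ : ℝ, ξ ≠ 0 → ∀ v : ℝ → ℝ, Continuous v →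
      ℓ * |ξ| ^ μ * (∫ t in (0:ℝ)..T, |v t| ^ μ) - T * ℓ ≤
        ∫ t in (0:ℝ)..T, A t (ξ * v t) := by
  intro ξ _ v hv
  have hderiv : ∀ t ∈ Icc 0 T, ∀ x, HasDerivAt (A t) (a t x) x := fun t ht x => by
    have hat : Continuous (a t) :=
      ha_cont.comp_continuous (continuous_const.prodMk continuous_id) fun x => ⟨ht, mem_univ x⟩
    rw [show A t = fun x => ∫ ζ in (0:ℝ)..x, a t ζ from funext (hA t)]
    exact intervalIntegral.integral_hasDerivAt_right (hat.intervalIntegrable _ _)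
      (hat.stronglyMeasurableAtFilter _ _) hat.continuousAt
  have hA_nonneg : ∀ t ∈ Icc 0 T, ∀ x, 0 ≤ A t x := fun t ht x => by
    rcases eq_or_ne x 0 with rfl | hx
    · simp [hA]
    · exact (pos_of_mul_pos_right (hAR t ht x hx).1 hμ.le).le
  have hℓ_nonneg : 0 ≤ ℓ :=
    hℓ ▸ Real.sInf_nonneg (by rintro _ ⟨t, ht, w, -, rfl⟩; exact hA_nonneg t ht w)
  have hℓ_le : ∀ t ∈ Icc 0 T, ∀ u, |u| = 1 → ℓ ≤ A t u := fun t ht u hu =>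
    hℓ ▸ csInf_le ⟨0, by rintro _ ⟨t, ht, w, -, rfl⟩; exact hA_nonneg t ht w⟩ ⟨t, ht, u, hu, rfl⟩
  refine mul_integral_sub_mul_le_integral hT.le
    ((hv.abs.rpow_const fun _ => Or.inr hμ.le).intervalIntegrable _ _) ?_ fun t ht => ?_
  · refine ContinuousOn.intervalIntegrable ?_
    rw [uIcc_of_le hT.le]
    simpa only [hA] using
      continuousOn_intervalIntegral_of_continuousOn_Icc_prod hT.le ha_cont (hv.const_mul ξ) 0
  · have hbound := mul_abs_rpow_sub_le (hderiv t ht) (fun x hx => (hAR t ht x hx).2) hμ.le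
      (hA_nonneg t ht) hℓ_nonneg (hℓ_le t ht) (ξ * v t)
    rwa [abs_mul, Real.mul_rpow (abs_nonneg _) (abs_nonneg _), ← mul_assoc] at hbound
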